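/- arXiv:2509.22672 — 6 statements merged into one kernel-verified Lean document; each statement's English description precedes it below -/
import Mathlib

section
/- Let V be a real inner product space, let σ₁,…,σₙ be linear isometries of V (linear maps preserving the inner product), and let μ₁,…,μₙ ≥ 0 be weights with μ₁+⋯+μₙ = 1. Let g > 0 and M be real numbers, and let β be a real number such that ⟨w, Σᵢ μᵢ σᵢ(w)⟩ ≥ β‖w‖² for all w ∈ V. Suppose g·β > 1. If v ∈ V satisfies 2g⟨v, σᵢ(v)⟩ − 2‖v‖² ≤ M for every i with μᵢ > 0, then ‖v‖² ≤ M / (2(g·β − 1)). -/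
open RealInnerProductSpace Finset

/-- **Averaged spectral gap (abstract form).** If linear isometries `σ i` of a real inner
product space satisfy the averaged Rayleigh bound `⟪w, ∑ μ i • σ i w⟫ ≥ β ‖w‖²` with
`g · β > 1`, and `v` satisfies the gap inequalities `2g⟪v, σ i v⟫ − 2‖v‖² ≤ M` for all `i`
in the support of `μ`, then `‖v‖² ≤ M / (2(gβ − 1))`. -/
theorem averaged_spectral_gap
    {V : Type*} [NormedAddCommGroup V] [InnerProductSpace ℝ V]
    {n : ℕ} (σ : Fin n → V →ₗ[ℝ] V)
    (hσ : ∀ i, ∀ x y : V, ⟪σ i x, σ i y⟫ = ⟪x, y⟫)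
    (μ : Fin n → ℝ) (hμ0 : ∀ i, 0 ≤ μ i) (hμ1 : ∑ i, μ i = 1)
    (g M β : ℝ) (hg : 0 < g)
    (hβ : ∀ w : V, β * ‖w‖ ^ 2 ≤ ⟪w, ∑ i, μ i • σ i w⟫)
    (hgβ : 1 < g * β)
    (v : V) (hv : ∀ i, 0 < μ i → 2 * g * ⟪v, σ i v⟫ - 2 * ‖v‖ ^ 2 ≤ M) :
    ‖v‖ ^ 2 ≤ M / (2 * (g * β - 1)) := by
  have hsum : ∑ i, μ i * (2 * g * ⟪v, σ i v⟫ - 2 * ‖v‖ ^ 2) ≤ M := by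
    calc ∑ i, μ i * (2 * g * ⟪v, σ i v⟫ - 2 * ‖v‖ ^ 2)
        ≤ ∑ i, μ i * M := by
          apply Finset.sum_le_sum
          intro i _
          rcases (hμ0 i).lt_or_eq with h | h
          · exact mul_le_mul_of_nonneg_left (hv i h) (hμ0 i)
          · simp [← h]
      _ = M := by rw [← Finset.sum_mul, hμ1, one_mul]
  have hinner : ∑ i, μ i * ⟪v, σ i v⟫ = ⟪v, ∑ i, μ i • σ i v⟫ := by
    rw [inner_sum]
    congr 1; ext i
    rw [real_inner_smul_right]
  have key : 2 * (g * β - 1) * ‖v‖ ^ 2 ≤ M := by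
    have hβv := hβ v
    calc 2 * (g * β - 1) * ‖v‖ ^ 2
        = 2 * g * (β * ‖v‖ ^ 2) - 2 * ‖v‖ ^ 2 := by ring
      _ ≤ 2 * g * ⟪v, ∑ i, μ i • σ i v⟫ - 2 * ‖v‖ ^ 2 := by
          have := mul_le_mul_of_nonneg_left hβv (by positivity : (0:ℝ) ≤ 2 * g)
          linarith
      _ = ∑ i, μ i * (2 * g * ⟪v, σ i v⟫ - 2 * ‖v‖ ^ 2) := by
          rw [← hinner, Finset.mul_sum]
          have : ∑ i, μ i * (2 * g * ⟪v, σ i v⟫ - 2 * ‖v‖ ^ 2)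
              = (∑ i, 2 * g * (μ i * ⟪v, σ i v⟫)) - (∑ i, μ i) * (2 * ‖v‖ ^ 2) := by
            rw [Finset.sum_mul, ← Finset.sum_sub_distrib]
            congr 1; ext i; ring
          rw [this, hμ1]; ring
      _ ≤ M := hsum
  have hpos : 0 < 2 * (g * β - 1) := by linarith
  rw [le_div_iff₀ hpos]
  linarith
end

section
/- Let H be a real symmetric 2×2 matrix with entries H₀₀, H₀₁ = H₁₀, H₁₁ satisfying 0 < 2|H₀₁| < H₀₀ < H₁₁ (the strictly reduced oblique case). Then the set O(Λ) of matrices U ∈ GL₂(ℤ) (integer 2×2 matrices with determinant ±1) satisfying (↑U)ᵀ H (↑U) = H, where ↑U denotes the real matrix obtained from U by coercing entries, has exactly 2 elements, namely ±I. -/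
open Matrix

lemma keyR (p q r : ℝ) (a c : ℝ) (hp0 : 0 < p) (hq2 : 4*q^2 < p^2) (h3 : p < r)
    (ha1 : 1 ≤ a^2) (hc1 : 1 ≤ c^2)
    (e : (a*p + c*q)*a + (a*q + c*r)*c = p) : False := by
  have hlin : 2*a*c*q = p - p*a^2 - r*c^2 := by linear_combination e
  have hsq : (2*a*c*q)^2 = (p - p*a^2 - r*c^2)^2 := by rw [hlin]
  have hac : 1 ≤ a^2 * c^2 := by nlinarith
  have hcross : 4*q^2*(a^2*c^2) < p^2*(a^2*c^2) := by nlinarith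
  rcases le_total (c^2) (a^2) with h | h
  · have t1 : 0 < r*c^2 - p := by nlinarith
    have t2 : 0 < 2*p*a^2 - p + r*c^2 := by nlinarith
    have t3 : (0:ℝ) ≤ p^2 * a^2 * (a^2 - c^2) :=
      mul_nonneg (mul_nonneg (sq_nonneg p) (sq_nonneg a)) (sub_nonneg.2 h)
    nlinarith [mul_pos t1 t2]
  · have t1 : 0 < p*(a^2-1) + (r-p)*c^2 := by nlinarith
    have t2 : 0 < p*a^2 - p + r*c^2 + p*c^2 := by nlinarith
    have t3 : (0:ℝ) ≤ p^2 * c^2 * (c^2 - a^2) :=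
      mul_nonneg (mul_nonneg (sq_nonneg p) (sq_nonneg c)) (sub_nonneg.2 h)
    nlinarith [mul_pos t1 t2]

lemma sq_one_int {a : ℤ} (h : (a:ℝ)^2 = 1) : a = 1 ∨ a = -1 := by
  have h' : a^2 = 1 := by exact_mod_cast h
  have : (a - 1) * (a + 1) = 0 := by ring_nf; omega
  rcases mul_eq_zero.mp this with h | h
  · left; omega
  · right; omega

lemma one_le_sq_cast {a : ℤ} (h : a ≠ 0) : (1:ℝ) ≤ (a:ℝ)^2 := by
  have : 1 ≤ a^2 := by nlinarith [Int.one_le_abs h, sq_abs a, abs_nonneg a]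
  exact_mod_cast this

lemma keyZ (p q r : ℝ) (a b c d : ℤ)
    (hp0 : 0 < p) (hq0 : q ≠ 0) (hq2 : 4*q^2 < p^2) (h3 : p < r)
    (hdet : a*d - b*c = 1 ∨ a*d - b*c = -1)
    (e00 : ((a:ℝ)*p + (c:ℝ)*q)*(a:ℝ) + ((a:ℝ)*q + (c:ℝ)*r)*(c:ℝ) = p)
    (e11 : ((b:ℝ)*p + (d:ℝ)*q)*(b:ℝ) + ((b:ℝ)*q + (d:ℝ)*r)*(d:ℝ) = r)
    (e01 : ((a:ℝ)*p + (c:ℝ)*q)*(b:ℝ) + ((a:ℝ)*q + (c:ℝ)*r)*(d:ℝ) = q) :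
    (a = 1 ∧ b = 0 ∧ c = 0 ∧ d = 1) ∨ (a = -1 ∧ b = 0 ∧ c = 0 ∧ d = -1) := by
  have hr0 : 0 < r := hp0.trans h3
  -- c = 0
  have hc : c = 0 := by
    by_contra hc0
    have hc1 := one_le_sq_cast hc0
    rcases eq_or_ne a 0 with ha | ha
    · rw [ha] at e00; push_cast at e00; nlinarith
    · exact keyR p q r a c hp0 hq2 h3 (one_le_sq_cast ha) hc1 e00
  subst hc
  push_cast at e00 e01 e11
  ring_nf at e00 e01 e11
  -- a² = 1
  have ha2 : (a:ℝ)^2 = 1 := by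
    have hmul : (a:ℝ)^2 * p = 1 * p := by ring_nf; linarith
    exact mul_right_cancel₀ (ne_of_gt hp0) hmul
  have haz := sq_one_int ha2
  have hd2 : d = 1 ∨ d = -1 := by
    rcases haz with h | h <;> rcases hdet with h' | h' <;> subst h <;> omega
  have hdr : (d:ℝ)^2 = 1 := by rcases hd2 with h | h <;> subst h <;> norm_num
  -- b = 0
  have hb : b = 0 := by
    by_contra hb0
    have hb1 := one_le_sq_cast hb0
    have hlin : 2*(b:ℝ)*(d:ℝ)*q = -((b:ℝ)^2*p) := by
      have : (b:ℝ)^2*p + 2*(b:ℝ)*(d:ℝ)*q + (d:ℝ)^2*r = r := by linear_combination e11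
      rw [hdr] at this; linarith
    have hsq : (2*(b:ℝ)*(d:ℝ)*q)^2 = ((b:ℝ)^2*p)^2 := by rw [hlin]; ring
    have h4 : 4*(b:ℝ)^2*q^2 = (b:ℝ)^4*p^2 := by
      linear_combination hsq - 4*(b:ℝ)^2*q^2*hdr
    nlinarith [mul_lt_mul_of_pos_right hq2 (show (0:ℝ) < (b:ℝ)^2 by linarith),
      mul_nonneg (mul_nonneg (mul_pos hp0 hp0).le (sub_nonneg.2 hb1)) (sq_nonneg (b:ℝ))]
  subst hb
  push_cast at e01
  have had : (a:ℝ)*(d:ℝ)*q = 1*q := by ring_nf; ring_nf at e01; linarith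
  have had1 : a * d = 1 := by
    have := mul_right_cancel₀ hq0 had
    exact_mod_cast this
  rcases haz with h | h <;> subst h
  · left; exact ⟨rfl, rfl, rfl, by omega⟩
  · right; exact ⟨rfl, rfl, rfl, by omega⟩

/-- The point group `O(Λ)` of a rank-2 lattice with Gram matrix `H`: integer `2×2`
matrices of determinant `±1` preserving `H` (via real coercion of entries). -/
def latticePointGroup (H : Matrix (Fin 2) (Fin 2) ℝ) : Set (Matrix (Fin 2) (Fin 2) ℤ) :=
  {U | (U.det = 1 ∨ U.det = -1) ∧
        (U.map (Int.cast : ℤ → ℝ))ᵀ * H * U.map (Int.cast : ℤ → ℝ) = H}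

/-- **Oblique case of the rank-2 Bravais test.** If the symmetric Gram matrix `H`
satisfies `0 < 2|H₀₁| < H₀₀ < H₁₁`, then the point group has exactly two elements,
namely `±I`. -/
theorem pointGroup_oblique
    (H : Matrix (Fin 2) (Fin 2) ℝ)
    (hsymm : H 1 0 = H 0 1)
    (h1 : 0 < 2 * |H 0 1|) (h2 : 2 * |H 0 1| < H 0 0) (h3 : H 0 0 < H 1 1) :
    (latticePointGroup H).ncard = 2 ∧
      latticePointGroup H = {1, -1} := by
  have hp0 : 0 < H 0 0 := by nlinarith [abs_nonneg (H 0 1)]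
  have hq0 : H 0 1 ≠ 0 := by
    intro h; rw [h] at h1; simp at h1
  have hq2 : 4 * (H 0 1)^2 < (H 0 0)^2 := by nlinarith [abs_nonneg (H 0 1), sq_abs (H 0 1)]
  have hset : latticePointGroup H = {1, -1} := by
    ext U
    constructor
    · rintro ⟨hdet, heq⟩
      have e00 := congrFun (congrFun heq 0) 0
      have e01 := congrFun (congrFun heq 0) 1
      have e11 := congrFun (congrFun heq 1) 1
      simp only [Matrix.mul_apply, Fin.sum_univ_two, Matrix.map_apply,
        Matrix.transpose_apply] at e00 e01 e11
      rw [hsymm] at e00 e01 e11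
      rw [Matrix.det_fin_two] at hdet
      have key := keyZ (H 0 0) (H 0 1) (H 1 1) (U 0 0) (U 0 1) (U 1 0) (U 1 1)
        hp0 hq0 hq2 h3 hdet e00 e11 e01
      rcases key with ⟨ha, hb, hc, hd⟩ | ⟨ha, hb, hc, hd⟩
      · left
        ext i j
        fin_cases i <;> fin_cases j <;> simp [ha, hb, hc, hd, Matrix.one_apply]
      · right
        ext i j
        fin_cases i <;> fin_cases j <;> simp [ha, hb, hc, hd, Matrix.one_apply]
    · intro hU
      rcases hU with h | h
      · subst h
        refine ⟨Or.inl (by simp), ?_⟩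
        simp
      · simp only [Set.mem_singleton_iff] at h
        subst h
        refine ⟨Or.inl (by simp [Matrix.det_fin_two]), ?_⟩
        have hm : ((-1 : Matrix (Fin 2) (Fin 2) ℤ).map (Int.cast : ℤ → ℝ)) = -1 := by
          ext i j
          fin_cases i <;> fin_cases j <;>
            simp [Matrix.map_apply, Matrix.one_apply]
        rw [hm]
        simp
  refine ⟨?_, hset⟩
  rw [hset, Set.ncard_pair]
  intro h
  have := congrFun (congrFun h 0) 0
  simp [Matrix.one_apply] at this
end

section
/- Let a, b be real numbers with 0 < a < b and let H be the diagonal 2×2 matrix diag(a, b). Then the set O(Λ) of matrices U ∈ GL₂(ℤ) (integer 2×2 matrices with determinant ±1) satisfying (↑U)ᵀ H (↑U) = H, where ↑U denotes the real matrix obtained from U by coercing entries, has exactly 4 elements, namely the four diagonal sign matrices diag(±1, ±1). -/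
/-!
Write `U = [[p, q], [r, s]]`. Preserving `diag(a, b)` means `a p² + b r² = a`,
`a p q + b r s = 0` and `a q² + b s² = b`. Since `a < b`, a nonzero integer `r` would give
`b r² ≥ b > a`, so `r = 0` and `p = ±1`; the mixed equation then forces `q = 0`, and
finally `s = ±1`. The determinant condition is then automatic.
-/

open Matrix

theorem Matrix.transpose_mul_diag_mul_self_eq_iff {R : Type*} [CommRing R] (a b : R)
    (M : Matrix (Fin 2) (Fin 2) R) :
    Mᵀ * !![a, 0; 0, b] * M = !![a, 0; 0, b] ↔
      a * M 0 0 ^ 2 + b * M 1 0 ^ 2 = a ∧ a * M 0 0 * M 0 1 + b * M 1 0 * M 1 1 = 0 ∧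
        a * M 0 1 ^ 2 + b * M 1 1 ^ 2 = b := by
  simp only [← Matrix.ext_iff, Fin.forall_fin_two, mul_apply, Fin.sum_univ_two, transpose_apply,
    of_apply, cons_val', cons_val_zero, cons_val_one, empty_val', cons_val_fin_one, mul_zero,
    add_zero, zero_add]
  constructor
  · rintro ⟨⟨h₀₀, h₀₁⟩, -, h₁₁⟩
    exact ⟨by linear_combination h₀₀, by linear_combination h₀₁, by linear_combination h₁₁⟩
  · rintro ⟨h₀₀, h₀₁, h₁₁⟩
    exact ⟨⟨by linear_combination h₀₀, by linear_combination h₀₁⟩, by linear_combination h₀₁,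
      by linear_combination h₁₁⟩

theorem Int.eq_zero_of_mul_sq_le {R : Type*} [CommRing R] [LinearOrder R]
    [IsStrictOrderedRing R] {b c : R} {r : ℤ} (hc : 0 ≤ c) (hcb : c < b) (h : b * r ^ 2 ≤ c) :
    r = 0 := by
  by_contra hr
  have : (1 : R) ≤ (r : R) ^ 2 := mod_cast (one_le_sq_iff_one_le_abs _).mpr (Int.one_le_abs hr)
  nlinarith

theorem rectangular_gram_eqs_int_iff {a b : ℝ} (ha : 0 < a) (hab : a < b) {p q r s : ℤ} :
    (a * p ^ 2 + b * r ^ 2 = a ∧ a * p * q + b * r * s = 0 ∧ a * q ^ 2 + b * s ^ 2 = b) ↔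
      r = 0 ∧ q = 0 ∧ p ^ 2 = 1 ∧ s ^ 2 = 1 := by
  constructor
  · rintro ⟨h₀₀, h₀₁, h₁₁⟩
    obtain rfl : r = 0 := Int.eq_zero_of_mul_sq_le ha.le hab (by nlinarith)
    have hp : p ^ 2 = 1 := by
      have : a * (p : ℝ) ^ 2 = a * 1 := by simpa using h₀₀
      exact_mod_cast mul_left_cancel₀ ha.ne' this
    obtain rfl : q = 0 := by
      have hp₀ : p ≠ 0 := by
        rintro rfl
        simp at hp
      simpa [ha.ne', hp₀] using h₀₁
    have hs : s ^ 2 = 1 := by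
      have : b * (s : ℝ) ^ 2 = b * 1 := by simpa using h₁₁
      exact_mod_cast mul_left_cancel₀ (ha.trans hab).ne' this
    exact ⟨rfl, rfl, hp, hs⟩
  · rintro ⟨rfl, rfl, hp, hs⟩
    have hp : (p : ℝ) ^ 2 = 1 := mod_cast hp
    have hs : (s : ℝ) ^ 2 = 1 := mod_cast hs
    simp [hp, hs]

theorem mem_latticePointGroup_diag_iff {a b : ℝ} (ha : 0 < a) (hab : a < b)
    (U : Matrix (Fin 2) (Fin 2) ℤ) :
    U ∈ latticePointGroup !![a, 0; 0, b] ↔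
      U 1 0 = 0 ∧ U 0 1 = 0 ∧ U 0 0 ^ 2 = 1 ∧ U 1 1 ^ 2 = 1 := by
  rw [latticePointGroup, Set.mem_ofPred_eq, transpose_mul_diag_mul_self_eq_iff]
  simp only [map_apply, rectangular_gram_eqs_int_iff ha hab, and_iff_right_iff_imp]
  rintro ⟨hr, hq, hp, hs⟩
  rw [det_fin_two, hr, hq, mul_zero, sub_zero, ← sq_eq_one_iff, mul_pow, hp, hs, one_mul]

theorem latticePointGroup_diag_eq {a b : ℝ} (ha : 0 < a) (hab : a < b) :
    latticePointGroup !![a, 0; 0, b] =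
      {!![1, 0; 0, 1], !![1, 0; 0, -1], !![-1, 0; 0, 1], !![-1, 0; 0, -1]} := by
  ext U
  obtain ⟨p, q, r, s, rfl⟩ : ∃ p q r s, U = !![p, q; r, s] := ⟨_, _, _, _, eta_fin_two U⟩
  simp only [mem_latticePointGroup_diag_iff ha hab, of_apply, cons_val', cons_val_zero,
    cons_val_fin_one, cons_val_one, sq_eq_one_iff, Set.mem_insert_iff, Set.mem_singleton_iff,
    EmbeddingLike.apply_eq_iff_eq, vecCons_inj, and_true]
  tauto

/-- **Rectangular case of the rank-2 Bravais test.** For `H = diag(a, b)` with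
`0 < a < b`, the point group has exactly four elements, the diagonal sign matrices. -/
theorem pointGroup_rectangular
    (a b : ℝ) (ha : 0 < a) (hab : a < b) :
    (latticePointGroup !![a, 0; 0, b]).ncard = 4 ∧
      latticePointGroup !![a, 0; 0, b] =
        {!![1, 0; 0, 1], !![1, 0; 0, -1], !![-1, 0; 0, 1], !![-1, 0; 0, -1]} := by
  refine ⟨?_, latticePointGroup_diag_eq ha hab⟩
  rw [latticePointGroup_diag_eq ha hab, Set.ncard_eq_toFinset_card']
  decide
end

section
/- Let a be a real number with a > 0 and let H = a·I be a positive scalar multiple of the 2×2 identity matrix. Then the set O(Λ) of matrices U ∈ GL₂(ℤ) (integer 2×2 matrices with determinant ±1) satisfying (↑U)ᵀ H (↑U) = H, where ↑U denotes the real matrix obtained from U by coercing entries, has exactly 8 elements (the signed permutation matrices). -/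
open Matrix

lemma int_sq_aux (x y : ℤ) (h : x*x + y*y = 1) :
    (x = 0 ∧ (y = 1 ∨ y = -1)) ∨ ((x = 1 ∨ x = -1) ∧ y = 0) := by
  have hx1 : -1 ≤ x := by nlinarith [mul_self_nonneg y, mul_self_nonneg (x+1)]
  have hx2 : x ≤ 1 := by nlinarith [mul_self_nonneg y, mul_self_nonneg (x-1)]
  have hy1 : -1 ≤ y := by nlinarith [mul_self_nonneg x, mul_self_nonneg (y+1)]
  have hy2 : y ≤ 1 := by nlinarith [mul_self_nonneg x, mul_self_nonneg (y-1)]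
  interval_cases x <;> interval_cases y <;> omega

def sqSet : Finset (Matrix (Fin 2) (Fin 2) ℤ) :=
  {!![1,0;0,1], !![1,0;0,-1], !![-1,0;0,1], !![-1,0;0,-1],
   !![0,1;1,0], !![0,1;-1,0], !![0,-1;1,0], !![0,-1;-1,0]}

lemma map_mul_cast (L M : Matrix (Fin 2) (Fin 2) ℤ) :
    (L * M).map (Int.cast : ℤ → ℝ) = L.map Int.cast * M.map Int.cast := by
  ext i j
  simp [Matrix.map_apply, Matrix.mul_apply, Fin.sum_univ_two]

lemma key (a : ℝ) (ha : 0 < a) (U : Matrix (Fin 2) (Fin 2) ℤ) :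
    U ∈ latticePointGroup (a • (1 : Matrix (Fin 2) (Fin 2) ℝ)) ↔ Uᵀ * U = 1 := by
  have htr : (U.map (Int.cast : ℤ → ℝ))ᵀ = Uᵀ.map Int.cast := rfl
  constructor
  · rintro ⟨-, hU⟩
    have h1 : (a : ℝ) • ((U.map (Int.cast : ℤ → ℝ))ᵀ * U.map (Int.cast : ℤ → ℝ)) =
        a • (1 : Matrix (Fin 2) (Fin 2) ℝ) := by
      rw [← hU]; simp [Matrix.mul_smul, Matrix.smul_mul]
    have h2 : (U.map (Int.cast : ℤ → ℝ))ᵀ * U.map (Int.cast : ℤ → ℝ) = 1 :=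
      smul_right_injective _ ha.ne' h1
    have h3 : (Uᵀ * U).map (Int.cast : ℤ → ℝ) = (1 : Matrix (Fin 2) (Fin 2) ℤ).map Int.cast := by
      rw [map_mul_cast, ← htr, h2]
      ext i j
      simp [Matrix.map_apply, Matrix.one_apply]
    exact Matrix.map_injective Int.cast_injective h3
  · intro h
    refine ⟨?_, ?_⟩
    · have := congrArg Matrix.det h
      rw [Matrix.det_mul, Matrix.det_transpose, Matrix.det_one] at this
      exact mul_self_eq_one_iff.mp this
    · have h2 : (U.map (Int.cast : ℤ → ℝ))ᵀ * U.map (Int.cast : ℤ → ℝ) = 1 := by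
        rw [htr, ← map_mul_cast, h]
        ext i j
        simp [Matrix.map_apply, Matrix.one_apply]
      simp [Matrix.mul_smul, Matrix.smul_mul, Matrix.mul_assoc, h2]

/-- **Square case of the rank-2 Bravais test.** For `H = a · I` with `a > 0`, the
point group has exactly eight elements (the signed permutation matrices). -/
theorem pointGroup_square
    (a : ℝ) (ha : 0 < a) :
    (latticePointGroup (a • (1 : Matrix (Fin 2) (Fin 2) ℝ))).ncard = 8 := by
  have hset : latticePointGroup (a • (1 : Matrix (Fin 2) (Fin 2) ℝ)) = (sqSet : Set _) := by
    ext U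
    rw [key a ha]
    constructor
    · intro h
      have h00 : U 0 0 * U 0 0 + U 1 0 * U 1 0 = 1 := by
        have := congrFun (congrFun h 0) 0
        simpa [Matrix.mul_apply, Fin.sum_univ_two, Matrix.one_apply] using this
      have h11 : U 0 1 * U 0 1 + U 1 1 * U 1 1 = 1 := by
        have := congrFun (congrFun h 1) 1
        simpa [Matrix.mul_apply, Fin.sum_univ_two, Matrix.one_apply] using this
      have h01 : U 0 0 * U 0 1 + U 1 0 * U 1 1 = 0 := by
        have := congrFun (congrFun h 0) 1
        simpa [Matrix.mul_apply, Fin.sum_univ_two, Matrix.one_apply] using this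
      have hU : U = !![U 0 0, U 0 1; U 1 0, U 1 1] := Matrix.eta_fin_two U
      rcases int_sq_aux _ _ h00 with ⟨e1, e2 | e2⟩ | ⟨e1 | e1, e2⟩ <;>
        rcases int_sq_aux _ _ h11 with ⟨f1, f2 | f2⟩ | ⟨f1 | f1, f2⟩ <;>
        first
          | (rw [e1, e2, f1, f2] at h01; omega)
          | (rw [hU, e1, e2, f1, f2]; decide)
    · intro h
      simp only [sqSet, Finset.coe_insert, Set.mem_insert_iff, Finset.coe_singleton,
        Set.mem_singleton_iff] at h
      rcases h with rfl | rfl | rfl | rfl | rfl | rfl | rfl | rfl <;> decide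
  rw [hset, Set.ncard_coe_finset]
  decide
end

section
/- Let a be a real number with a > 0 and let H be the real symmetric 2×2 matrix with H₀₀ = H₁₁ = a and H₀₁ = H₁₀ = a/2. Then the set O(Λ) of matrices U ∈ GL₂(ℤ) (integer 2×2 matrices with determinant ±1) satisfying (↑U)ᵀ H (↑U) = H, where ↑U denotes the real matrix obtained from U by coercing entries, has exactly 12 elements. -/
open Matrix

set_option maxHeartbeats 1000000 in
/-- **Hexagonal case of the rank-2 Bravais test.** For the hexagonal Gram matrix
`H = !![a, a/2; a/2, a]` with `a > 0`, the point group has exactly twelve elements. -/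
theorem pointGroup_hexagonal
    (a : ℝ) (ha : 0 < a) :
    (latticePointGroup !![a, a / 2; a / 2, a]).ncard = 12 := by
  classical
  have hiff : ∀ U : Matrix (Fin 2) (Fin 2) ℤ,
      ((U.map (Int.cast : ℤ → ℝ))ᵀ * !![a, a/2; a/2, a] * U.map (Int.cast : ℤ → ℝ)
        = !![a, a/2; a/2, a])
      ↔ Uᵀ * !![2,1;1,2] * U = !![2,1;1,2] := by
    intro U
    have hH : !![a, a/2; a/2, a]
        = (a/2) • ((!![2,1;1,2] : Matrix (Fin 2) (Fin 2) ℤ).map (Int.cast : ℤ → ℝ)) := by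
      ext i j; fin_cases i <;> fin_cases j <;> simp
    have hmap : ∀ M N : Matrix (Fin 2) (Fin 2) ℤ,
        (M * N).map (Int.cast : ℤ → ℝ) = M.map Int.cast * N.map Int.cast := fun M N =>
      Matrix.map_mul (f := Int.castRingHom ℝ)
    have ht : (U.map (Int.cast : ℤ → ℝ))ᵀ = Uᵀ.map Int.cast := (Matrix.transpose_map).symm
    rw [hH, Matrix.mul_smul, Matrix.smul_mul, ht, ← hmap, ← hmap]
    constructor
    · intro h
      exact Matrix.map_injective Int.cast_injective
        (smul_right_injective _ (by positivity : (a/2) ≠ 0) h)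
    · intro h; rw [h]
  have key : latticePointGroup !![a, a / 2; a / 2, a]
      = ↑({!![-1,-1;0,1], !![-1,-1;1,0], !![-1,0;0,-1], !![-1,0;1,1],
           !![0,-1;-1,0], !![0,-1;1,1], !![0,1;-1,-1], !![0,1;1,0],
           !![1,0;-1,-1], !![1,0;0,1], !![1,1;-1,0], !![1,1;0,-1]} :
           Finset (Matrix (Fin 2) (Fin 2) ℤ)) := by
    ext U
    simp only [latticePointGroup, Set.mem_setOf_eq, hiff, Finset.coe_insert,
      Set.mem_insert_iff, Finset.coe_singleton, Set.mem_singleton_iff]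
    constructor
    · rintro ⟨-, hG⟩
      obtain ⟨p, q, r, s, rfl⟩ : ∃ p q r s, U = !![p, q; r, s] :=
        ⟨_, _, _, _, (Matrix.etaExpand_eq U).symm⟩
      have e1 := congrFun (congrFun hG 0) 0
      have e2 := congrFun (congrFun hG 0) 1
      have e3 := congrFun (congrFun hG 1) 1
      simp [Matrix.mul_apply, Fin.sum_univ_two, Matrix.transpose_apply, Matrix.vecHead, Matrix.vecTail] at e1 e2 e3
      have hp : p^2 ≤ 1 := by nlinarith [sq_nonneg (2*r + p)]
      have hr : r^2 ≤ 1 := by nlinarith [sq_nonneg (2*p + r)]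
      have hq : q^2 ≤ 1 := by nlinarith [sq_nonneg (2*s + q)]
      have hs : s^2 ≤ 1 := by nlinarith [sq_nonneg (2*q + s)]
      obtain ⟨hp1, hp2⟩ := abs_le_of_sq_le_sq' (by linarith : p ^ 2 ≤ 1 ^ 2) one_pos.le
      obtain ⟨hq1, hq2⟩ := abs_le_of_sq_le_sq' (by linarith : q ^ 2 ≤ 1 ^ 2) one_pos.le
      obtain ⟨hr1, hr2⟩ := abs_le_of_sq_le_sq' (by linarith : r ^ 2 ≤ 1 ^ 2) one_pos.le
      obtain ⟨hs1, hs2⟩ := abs_le_of_sq_le_sq' (by linarith : s ^ 2 ≤ 1 ^ 2) one_pos.le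
      clear hG hp hq hr hs
      interval_cases p <;> interval_cases q <;> interval_cases r <;> interval_cases s <;>
        first
          | omega
          | decide
    · rintro (rfl|rfl|rfl|rfl|rfl|rfl|rfl|rfl|rfl|rfl|rfl|rfl) <;>
        exact ⟨by decide, by decide⟩
  rw [key, Set.ncard_coe_finset]
  decide
end

section
/- Let H be a real symmetric positive definite 2×2 matrix whose entries satisfy the reduction conditions 0 ≤ 2H₀₁ ≤ H₀₀ ≤ H₁₁ (Lagrange/LLL-reduced Gram matrix). Then the cardinality of the set O(Λ) = { U ∈ GL₂(ℤ) : (↑U)ᵀ H (↑U) = H }, where ↑U denotes the real matrix obtained from the integer matrix U by coercing entries, belongs to {2, 4, 8, 12}. -/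
/-!
For `H = !![a, b; b, c]` reduced (`0 ≤ 2b ≤ a ≤ c`), the form `Q(x, y) = ax² + 2bxy + cy²`
satisfies `Q(x, y) ≥ a (x² - |xy| + y²) + (c - a) y²`. The columns of `U ∈ O(Λ)` have `Q`-values
`a` and `c`; this, and `det U = ±1` for a second column `(p, 0)`, forces the entries of `U` into
`{-1, 0, 1}`.

With `s = b`, `t = a - 2b`, `r = c - a`, all nonnegative, `H = s A₂ + t I + r E` for the integral
Gram matrices `A₂ = !![2, 1; 1, 2]` (hexagonal), `I` (square) and `E = !![0, 0; 0, 1]`. For each of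
the finitely many candidates `U`, the defects `UᵀGU - G` of these three never have entries of
opposite signs, so `U` preserves `H` iff it preserves every piece with a nonzero coefficient. Thus
`O(Λ)` depends only on which of `s, t, r` vanish (not both `s` and `t`, as `a > 0`), i.e. on the
Bravais type, and a finite count over the six types gives `2, 4, 4, 4, 8, 12`.
-/

open Matrix

theorem mul_add_mul_add_mul_eq_zero_iff {R : Type*} [Ring R] [LinearOrder R]
    [IsStrictOrderedRing R] {s t r x y z : R} (hs : 0 ≤ s) (ht : 0 ≤ t) (hr : 0 ≤ r)
    (hsign : (0 ≤ x ∧ 0 ≤ y ∧ 0 ≤ z) ∨ (x ≤ 0 ∧ y ≤ 0 ∧ z ≤ 0)) :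
    s * x + t * y + r * z = 0 ↔ (s = 0 ∨ x = 0) ∧ (t = 0 ∨ y = 0) ∧ (r = 0 ∨ z = 0) := by
  have key : ∀ {x y z : R}, 0 ≤ x → 0 ≤ y → 0 ≤ z →
      (s * x + t * y + r * z = 0 ↔ (s = 0 ∨ x = 0) ∧ (t = 0 ∨ y = 0) ∧ (r = 0 ∨ z = 0)) := by
    intro x y z hx hy hz
    rw [add_eq_zero_iff_of_nonneg (add_nonneg (mul_nonneg hs hx) (mul_nonneg ht hy))
      (mul_nonneg hr hz), add_eq_zero_iff_of_nonneg (mul_nonneg hs hx) (mul_nonneg ht hy)]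
    simp only [mul_eq_zero, and_assoc]
  rcases hsign with ⟨hx, hy, hz⟩ | ⟨hx, hy, hz⟩
  · exact key hx hy hz
  · simpa only [mul_neg, ← neg_add, neg_eq_zero] using
      key (neg_nonneg.2 hx) (neg_nonneg.2 hy) (neg_nonneg.2 hz)

theorem Int.abs_le_one_of_sq_sub_abs_mul_add_sq_le_one {x y : ℤ}
    (h : x ^ 2 - |x * y| + y ^ 2 ≤ 1) : |x| ≤ 1 ∧ |y| ≤ 1 := by
  rw [abs_mul, ← sq_abs x, ← sq_abs y] at h
  constructor <;> nlinarith [sq_nonneg (2 * |y| - |x|), sq_nonneg (2 * |x| - |y|)]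

theorem le_quadForm_of_reduced {a b c x y : ℝ} (h1 : 0 ≤ 2 * b) (h2 : 2 * b ≤ a) :
    a * (x ^ 2 - |x * y| + y ^ 2) + (c - a) * y ^ 2 ≤ a * x ^ 2 + 2 * b * x * y + c * y ^ 2 := by
  nlinarith [mul_le_mul_of_nonneg_left (neg_abs_le (x * y)) h1,
    mul_le_mul_of_nonneg_right h2 (abs_nonneg (x * y))]

theorem abs_le_one_of_quadForm_le {a b c : ℝ} (ha : 0 < a) (h1 : 0 ≤ 2 * b) (h2 : 2 * b ≤ a)
    {x y : ℤ} (h : a * x ^ 2 + 2 * b * x * y + c * y ^ 2 ≤ a + (c - a) * y ^ 2) :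
    |x| ≤ 1 ∧ |y| ≤ 1 := by
  apply Int.abs_le_one_of_sq_sub_abs_mul_add_sq_le_one
  have : a * ((x : ℝ) ^ 2 - |(x : ℝ) * y| + (y : ℝ) ^ 2) ≤ a * 1 := by
    linarith [le_quadForm_of_reduced (c := c) (x := (x : ℝ)) (y := (y : ℝ)) h1 h2]
  exact_mod_cast le_of_mul_le_mul_left this ha

theorem transpose_mul_mul_apply_self {H V : Matrix (Fin 2) (Fin 2) ℝ} (hsymm : H 1 0 = H 0 1)
    (j : Fin 2) :
    (Vᵀ * H * V) j j = H 0 0 * V 0 j ^ 2 + 2 * H 0 1 * V 0 j * V 1 j + H 1 1 * V 1 j ^ 2 := by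
  simp only [mul_apply, Fin.sum_univ_two, transpose_apply, hsymm]
  ring

def shortMatrices : Finset (Matrix (Fin 2) (Fin 2) ℤ) :=
  Fintype.piFinset fun _ => Fintype.piFinset fun _ => {-1, 0, 1}

theorem mem_shortMatrices {U : Matrix (Fin 2) (Fin 2) ℤ} :
    U ∈ shortMatrices ↔ ∀ i j, |U i j| ≤ 1 := by
  refine (Fintype.mem_piFinset (f := U)).trans (forall_congr' fun i => ?_)
  refine (Fintype.mem_piFinset (f := U i)).trans (forall_congr' fun j => ?_)
  simp only [Finset.mem_insert, Finset.mem_singleton, abs_le]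
  omega

theorem mem_shortMatrices_of_mem_latticePointGroup {H : Matrix (Fin 2) (Fin 2) ℝ}
    (hsymm : H 1 0 = H 0 1) (ha : 0 < H 0 0) (h1 : 0 ≤ 2 * H 0 1) (h2 : 2 * H 0 1 ≤ H 0 0)
    (h3 : H 0 0 ≤ H 1 1) {U : Matrix (Fin 2) (Fin 2) ℤ} (hU : U ∈ latticePointGroup H) :
    U ∈ shortMatrices := by
  obtain ⟨hdet, hpres⟩ := hU
  have hcol (j : Fin 2) : H 0 0 * (U 0 j : ℝ) ^ 2 + 2 * H 0 1 * U 0 j * U 1 j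
      + H 1 1 * (U 1 j : ℝ) ^ 2 = H j j := by
    simpa only [transpose_mul_mul_apply_self hsymm, map_apply] using congrFun (congrFun hpres j) j
  have hcol0 : |U 0 0| ≤ 1 ∧ |U 1 0| ≤ 1 :=
    abs_le_one_of_quadForm_le ha h1 h2 (by rw [hcol 0]; nlinarith [sq_nonneg (U 1 0 : ℝ)])
  have hcol1 : |U 0 1| ≤ 1 ∧ |U 1 1| ≤ 1 := by
    by_cases hq : U 1 1 = 0
    · rw [det_fin_two, hq] at hdet
      have hp : U 0 1 = 1 ∨ U 0 1 = -1 := by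
        rcases hdet with h | h
        · exact Int.eq_one_or_neg_one_of_mul_eq_one (v := -U 1 0) (by linarith)
        · exact Int.eq_one_or_neg_one_of_mul_eq_one (v := U 1 0) (by linarith)
      rcases hp with hp | hp <;> simp [hp, hq]
    · have hq1 : (1 : ℝ) ≤ (U 1 1 : ℝ) ^ 2 := by
        exact_mod_cast (one_le_sq_iff_one_le_abs _).2 (Int.one_le_abs hq)
      exact abs_le_one_of_quadForm_le ha h1 h2 (by rw [hcol 1]; nlinarith)
  rw [mem_shortMatrices]
  simp only [Fin.forall_fin_two]
  exact ⟨⟨hcol0.1, hcol1.1⟩, hcol0.2, hcol1.2⟩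

def hexGram : Matrix (Fin 2) (Fin 2) ℤ := !![2, 1; 1, 2]

def sndCoordGram : Matrix (Fin 2) (Fin 2) ℤ := !![0, 0; 0, 1]

def gramDefect (U G : Matrix (Fin 2) (Fin 2) ℤ) : Matrix (Fin 2) (Fin 2) ℤ := Uᵀ * G * U - G

theorem gramDefect_map (U G : Matrix (Fin 2) (Fin 2) ℤ) :
    (gramDefect U G).map (Int.cast : ℤ → ℝ) =
      (U.map Int.cast)ᵀ * G.map Int.cast * U.map Int.cast - G.map Int.cast := by
  simp only [gramDefect, ← Int.coe_castRingHom, ← RingHom.mapMatrix_apply, map_sub, map_mul]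
  simp only [RingHom.mapMatrix_apply, transpose_map]

theorem eq_smul_hexGram_add_smul_one_add_smul_sndCoordGram {H : Matrix (Fin 2) (Fin 2) ℝ}
    (hsymm : H 1 0 = H 0 1) :
    H = H 0 1 • hexGram.map Int.cast + (H 0 0 - 2 * H 0 1) • 1 +
      (H 1 1 - H 0 0) • sndCoordGram.map Int.cast := by
  ext i j
  fin_cases i <;> fin_cases j <;> simp [hexGram, sndCoordGram, hsymm] <;> ring

theorem transpose_mul_mul_sub_eq {H : Matrix (Fin 2) (Fin 2) ℝ} (hsymm : H 1 0 = H 0 1)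
    (U : Matrix (Fin 2) (Fin 2) ℤ) :
    (U.map Int.cast)ᵀ * H * U.map Int.cast - H =
      H 0 1 • (gramDefect U hexGram).map Int.cast +
        (H 0 0 - 2 * H 0 1) • (gramDefect U 1).map Int.cast +
        (H 1 1 - H 0 0) • (gramDefect U sndCoordGram).map Int.cast := by
  conv_lhs => rw [eq_smul_hexGram_add_smul_one_add_smul_sndCoordGram hsymm]
  simp only [gramDefect_map, Matrix.map_one, Int.cast_zero, Int.cast_one, mul_add, add_mul,
    Matrix.mul_smul, Matrix.smul_mul, smul_sub]
  abel

theorem gramDefect_sign_coherent {U : Matrix (Fin 2) (Fin 2) ℤ} (hU : U ∈ shortMatrices)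
    (hdet : U.det = 1 ∨ U.det = -1) (i j : Fin 2) :
    (0 ≤ gramDefect U hexGram i j ∧ 0 ≤ gramDefect U 1 i j ∧ 0 ≤ gramDefect U sndCoordGram i j) ∨
    (gramDefect U hexGram i j ≤ 0 ∧ gramDefect U 1 i j ≤ 0 ∧
      gramDefect U sndCoordGram i j ≤ 0) := by
  revert U
  fin_cases i <;> fin_cases j <;> decide

/-- `zs`, `zt`, `zr` record which of `s = b`, `t = a - 2b`, `r = c - a` vanish. -/
def pointGroupOfType (zs zt zr : Bool) : Finset (Matrix (Fin 2) (Fin 2) ℤ) :=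
  {U ∈ shortMatrices | (U.det = 1 ∨ U.det = -1) ∧ (zs ∨ gramDefect U hexGram = 0) ∧
    (zt ∨ gramDefect U 1 = 0) ∧ (zr ∨ gramDefect U sndCoordGram = 0)}

theorem card_pointGroupOfType (zs zt zr : Bool) (h : ¬(zs ∧ zt)) :
    (pointGroupOfType zs zt zr).card ∈ ({2, 4, 8, 12} : Set ℕ) := by
  revert zs zt zr
  decide

theorem latticePointGroup_eq_pointGroupOfType {H : Matrix (Fin 2) (Fin 2) ℝ}
    (hsymm : H 1 0 = H 0 1) (ha : 0 < H 0 0) (h1 : 0 ≤ 2 * H 0 1) (h2 : 2 * H 0 1 ≤ H 0 0)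
    (h3 : H 0 0 ≤ H 1 1) :
    latticePointGroup H = pointGroupOfType (decide (H 0 1 = 0)) (decide (H 0 0 - 2 * H 0 1 = 0))
      (decide (H 1 1 - H 0 0 = 0)) := by
  ext U
  have hpres : U ∈ shortMatrices → (U.det = 1 ∨ U.det = -1) →
      ((U.map (Int.cast : ℤ → ℝ))ᵀ * H * U.map Int.cast = H ↔
        (H 0 1 = 0 ∨ gramDefect U hexGram = 0) ∧ (H 0 0 - 2 * H 0 1 = 0 ∨ gramDefect U 1 = 0) ∧
        (H 1 1 - H 0 0 = 0 ∨ gramDefect U sndCoordGram = 0)) := by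
    intro hU hdet
    have hentry (i j : Fin 2) := mul_add_mul_add_mul_eq_zero_iff (s := H 0 1)
      (t := H 0 0 - 2 * H 0 1) (r := H 1 1 - H 0 0) (by linarith) (by linarith) (by linarith)
      (x := (gramDefect U hexGram i j : ℝ)) (y := (gramDefect U 1 i j : ℝ))
      (z := (gramDefect U sndCoordGram i j : ℝ))
      (by exact_mod_cast gramDefect_sign_coherent hU hdet i j)
    rw [← sub_eq_zero, transpose_mul_mul_sub_eq hsymm, ← Matrix.ext_iff]
    simp only [Matrix.add_apply, Matrix.smul_apply, map_apply, Matrix.zero_apply, smul_eq_mul,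
      hentry, Int.cast_eq_zero, forall_and, ← forall_or_left, ← Matrix.ext_iff]
  simp only [latticePointGroup, pointGroupOfType, Set.mem_ofPred_eq, Finset.coe_filter,
    decide_eq_true_eq]
  constructor
  · rintro ⟨hdet, h⟩
    have hU := mem_shortMatrices_of_mem_latticePointGroup hsymm ha h1 h2 h3 ⟨hdet, h⟩
    exact ⟨hU, hdet, (hpres hU hdet).1 h⟩
  · rintro ⟨hU, hdet, h⟩
    exact ⟨hdet, (hpres hU hdet).2 h⟩

theorem pointGroup_card_mem_general
    (H : Matrix (Fin 2) (Fin 2) ℝ)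
    (hpos : H.PosDef)
    (h1 : 0 ≤ 2 * H 0 1) (h2 : 2 * H 0 1 ≤ H 0 0) (h3 : H 0 0 ≤ H 1 1) :
    (latticePointGroup H).ncard ∈ ({2, 4, 8, 12} : Set ℕ) := by
  have hsymm : H 1 0 = H 0 1 := by simpa using (hpos.isHermitian.apply 1 0).symm
  have ha : 0 < H 0 0 := hpos.diag_pos
  rw [latticePointGroup_eq_pointGroupOfType hsymm ha h1 h2 h3, Set.ncard_coe_finset]
  refine card_pointGroupOfType _ _ _ ?_
  simp only [decide_eq_true_eq]
  rintro ⟨hs, ht⟩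
  linarith

/-- **Rank-2 Bravais test (Corollary 1.5).** For a symmetric positive definite
reduced Gram matrix `H` (with `0 ≤ 2H₀₁ ≤ H₀₀ ≤ H₁₁`), the point group of the
corresponding rank-2 lattice has order `2`, `4`, `8`, or `12`. -/
theorem pointGroup_card_mem
    (H : Matrix (Fin 2) (Fin 2) ℝ)
    (hsymm : H 1 0 = H 0 1)
    (hpos : H.PosDef)
    (h1 : 0 ≤ 2 * H 0 1) (h2 : 2 * H 0 1 ≤ H 0 0) (h3 : H 0 0 ≤ H 1 1) :
    (latticePointGroup H).ncard ∈ ({2, 4, 8, 12} : Set ℕ) :=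
  pointGroup_card_mem_general H hpos h1 h2 h3
end
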